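/- The optimization problem: minimize W(s) = λΣ_γ φ_γ log(ε_γ + Σ_θ α_γ(θ)s(θ)v_γ(θ)) − Σ_θ τ(θ)ρ(θ)log s(θ) + Σ_θ τ(θ)s(θ) over s ∈ {s : 0 < s(θ) ≤ ρ(θ) for all θ}, has a unique solution s*, and s* satisfies 0 < s*(θ) < ρ(θ) for all θ. -/

import Mathlib

/-! In the coordinates `s = exp y` the objective becomes
`λ ∑ φ log (ε + ∑ α v exp y) + ∑ τ (exp y - ρ y)`: a log-sum-exp part, convex by Hölder's
inequality, plus a separable part that is strictly convex and coercive. Hence it has exactly one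
global minimiser `y`. At `y` every partial derivative vanishes; since the log-sum-exp part is
strictly increasing in each coordinate, this forces `τ (exp y - ρ) < 0`, i.e. `exp y < ρ`.
So `exp y` lies inside the box, and since the logarithm of any minimiser over the box is a global
minimiser in the new coordinates, `exp y` is the only minimiser of `W` over the box. -/

open Finset Real

variable {Θ Γ : Type*} [Fintype Θ] [Fintype Γ]

noncomputable def W (lam : ℝ) (φ ε : Γ → ℝ) (α v : Γ → Θ → ℝ) (τ ρ : Θ → ℝ)
    (s : Θ → ℝ) : ℝ :=
  lam * ∑ γ : Γ, φ γ * Real.log (ε γ + ∑ θ : Θ, α γ θ * s θ * v γ θ)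
    - ∑ θ : Θ, τ θ * ρ θ * Real.log (s θ) + ∑ θ : Θ, τ θ * s θ

open Filter

theorem add_sum_mul_exp_pos {ι : Type*} [Fintype ι] {c : ℝ} {w : ι → ℝ} (hc : 0 < c)
    (hw : ∀ i, 0 ≤ w i) (y : ι → ℝ) : 0 < c + ∑ i, w i * exp (y i) :=
  add_pos_of_pos_of_nonneg hc (sum_nonneg fun i _ => mul_nonneg (hw i) (exp_pos _).le)

theorem add_sum_mul_exp_mul_add_mul_le {ι : Type*} [Fintype ι] {c : ℝ} {w : ι → ℝ} (hc : 0 < c)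
    (hw : ∀ i, 0 ≤ w i) (x y : ι → ℝ) {a b : ℝ} (ha : 0 ≤ a) (hb : 0 < b) (hab : a + b = 1) :
    c + ∑ i, w i * exp (a * x i + b * y i) ≤
      (c + ∑ i, w i * exp (x i)) ^ a * (c + ∑ i, w i * exp (y i)) ^ b := by
  -- weighted Hölder over `Option ι`, the constant `c` being the weight at `none`
  let wt : Option ι → ℝ := fun o => o.elim c fun i => w i * exp (x i)
  let z : Option ι → ℝ := fun o => o.elim 0 fun i => y i - x i
  have hwt : ∀ o, 0 ≤ wt o := by
    rintro (_ | i)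
    exacts [hc.le, mul_nonneg (hw i) (exp_pos _).le]
  have hp : 1 ≤ b⁻¹ := one_le_inv₀ hb |>.2 (by linarith)
  have := inner_le_weight_mul_Lp_of_nonneg univ hp wt (fun o => exp (b * z o)) hwt
    fun _ => (exp_pos _).le
  simp only [← exp_mul, mul_right_comm b, mul_inv_cancel₀ hb.ne', one_mul, inv_inv,
    Fintype.sum_option, wt, z, Option.elim, mul_zero, exp_zero, mul_one] at this
  obtain rfl : a = 1 - b := eq_sub_of_add_eq hab
  convert this using 3
  · rw [mul_assoc, ← exp_add]; ring_nf
  · simp only [mul_assoc, ← exp_add, add_sub_cancel]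

theorem convexOn_log_add_sum_mul_exp {ι : Type*} [Fintype ι] {c : ℝ} {w : ι → ℝ} (hc : 0 < c)
    (hw : ∀ i, 0 ≤ w i) :
    ConvexOn ℝ Set.univ fun y : ι → ℝ => log (c + ∑ i, w i * exp (y i)) := by
  refine convexOn_iff_forall_pos.2 ⟨convex_univ, fun x _ y _ a b ha hb hab => ?_⟩
  have hx := add_sum_mul_exp_pos hc hw x
  have hy := add_sum_mul_exp_pos hc hw y
  simp only [Pi.add_apply, Pi.smul_apply, smul_eq_mul]
  calc log (c + ∑ i, w i * exp (a * x i + b * y i))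
      ≤ log ((c + ∑ i, w i * exp (x i)) ^ a * (c + ∑ i, w i * exp (y i)) ^ b) :=
        log_le_log (add_sum_mul_exp_pos hc hw _)
          (add_sum_mul_exp_mul_add_mul_le hc hw x y ha.le hb hab)
    _ = _ := by rw [log_mul (by positivity) (by positivity), log_rpow hx, log_rpow hy]

theorem convexOn_sum {ι E : Type*} [AddCommGroup E] [Module ℝ E] {s : Set E} (hs : Convex ℝ s)
    {f : ι → E → ℝ} (t : Finset ι) (hf : ∀ i ∈ t, ConvexOn ℝ s (f i)) :
    ConvexOn ℝ s fun x => ∑ i ∈ t, f i x := by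
  induction t using Finset.cons_induction with
  | empty => simpa using convexOn_const (0 : ℝ) hs
  | cons i t hi ih =>
    simp only [sum_cons]
    exact (hf i (mem_cons_self i t)).add (ih fun j hj => hf j (mem_cons_of_mem hj))

theorem strictConvexOn_univ_sum_apply {ι : Type*} [Fintype ι] {f : ι → ℝ → ℝ}
    (hf : ∀ i, StrictConvexOn ℝ Set.univ (f i)) :
    StrictConvexOn ℝ Set.univ fun y : ι → ℝ => ∑ i, f i (y i) := by
  refine ⟨convex_univ, fun x _ y _ hxy a b ha hb hab => ?_⟩
  obtain ⟨i, hi⟩ := Function.ne_iff.1 hxy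
  simp only [Pi.add_apply, Pi.smul_apply, smul_eq_mul, mul_sum, ← sum_add_distrib]
  exact sum_lt_sum (fun j _ => (hf j).convexOn.2 trivial trivial ha.le hb.le hab)
    ⟨i, mem_univ i, (hf i).2 trivial trivial hi ha hb hab⟩

theorem strictConvexOn_mul_exp_sub_mul {τ : ℝ} (hτ : 0 < τ) (ρ : ℝ) :
    StrictConvexOn ℝ Set.univ fun u => τ * (exp u - ρ * u) := by
  refine ⟨convex_univ, fun x _ y _ hxy a b ha hb hab => ?_⟩
  have := mul_lt_mul_of_pos_left (strictConvexOn_exp.2 trivial trivial hxy ha hb hab) hτ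
  simp only [smul_eq_mul] at this ⊢
  linear_combination this

theorem mul_sub_log_add_one_le_exp {ρ : ℝ} (hρ : 0 < ρ) (u : ℝ) :
    ρ * (u - log ρ + 1) ≤ exp u := by
  have := add_one_le_exp (u - log ρ)
  rwa [exp_sub, exp_log hρ, le_div_iff₀ hρ, mul_comm] at this

theorem tendsto_exp_sub_mul_cocompact {ρ : ℝ} (hρ : 0 < ρ) :
    Tendsto (fun u => exp u - ρ * u) (cocompact ℝ) atTop := by
  rw [cocompact_eq_atBot_atTop, tendsto_sup]
  constructor
  · refine tendsto_atTop_mono (fun u => ?_) (tendsto_neg_atBot_atTop.const_mul_atTop hρ)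
    linarith [exp_pos u]
  · refine tendsto_atTop_mono (fun u => ?_)
      (tendsto_atTop_add_const_right _ (2 * ρ * (1 - log (2 * ρ))) (tendsto_id.const_mul_atTop hρ))
    have := mul_sub_log_add_one_le_exp (by positivity : 0 < 2 * ρ) u
    simp only [id]
    linarith

theorem tendsto_sum_apply_cocompact_atTop {ι : Type*} [Fintype ι] {X : ι → Type*}
    [∀ i, TopologicalSpace (X i)] {f : ∀ i, X i → ℝ} (hbdd : ∀ i, BddBelow (Set.range (f i)))
    (hf : ∀ i, Tendsto (f i) (cocompact (X i)) atTop) :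
    Tendsto (fun x => ∑ i, f i (x i)) (cocompact (∀ i, X i)) atTop := by
  choose m hm using hbdd
  have hm' : ∀ i x, m i ≤ f i x := fun i x => hm i ⟨x, rfl⟩
  rw [← coprodᵢ_cocompact, Filter.coprodᵢ, tendsto_iSup]
  intro i
  refine tendsto_atTop_mono (fun x => ?_)
    (tendsto_atTop_add_const_right _ (∑ j, m j - m i) ((hf i).comp tendsto_comap))
  have := single_le_sum (fun j _ => sub_nonneg.2 (hm' j (x j))) (mem_univ i)
  simp only [sum_sub_distrib] at this
  simp only [Function.comp_apply]
  linarith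

/-- `W` in the coordinates `s = exp y`, with `c = α * v`. -/
noncomputable def Wexp (lam : ℝ) (φ ε : Γ → ℝ) (c : Γ → Θ → ℝ) (τ ρ : Θ → ℝ) (y : Θ → ℝ) : ℝ :=
  lam * ∑ γ, φ γ * log (ε γ + ∑ θ, c γ θ * exp (y θ)) + ∑ θ, τ θ * (exp (y θ) - ρ θ * y θ)

section Wexp

variable {lam : ℝ} {φ ε : Γ → ℝ} {c : Γ → Θ → ℝ} {τ ρ : Θ → ℝ}

theorem W_exp_eq_Wexp (α v : Γ → Θ → ℝ) (y : Θ → ℝ) :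
    W lam φ ε α v τ ρ (fun θ => exp (y θ)) =
      Wexp lam φ ε (fun γ θ => α γ θ * v γ θ) τ ρ y := by
  simp only [W, Wexp, log_exp, mul_sub, sum_sub_distrib, mul_right_comm _ (exp _), mul_assoc]
  ring

theorem continuous_Wexp (hε : ∀ γ, 0 < ε γ) (hc : ∀ γ θ, 0 ≤ c γ θ) :
    Continuous (Wexp lam φ ε c τ ρ) :=
  (continuous_const.mul (continuous_finsetSum _ fun γ _ => continuous_const.mul
    (Continuous.log (by fun_prop) fun y => (add_sum_mul_exp_pos (hε γ) (hc γ) y).ne'))).add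
    (by fun_prop)

theorem strictConvexOn_Wexp (hlam : 0 ≤ lam) (hφ : ∀ γ, 0 ≤ φ γ) (hε : ∀ γ, 0 < ε γ)
    (hc : ∀ γ θ, 0 ≤ c γ θ) (hτ : ∀ θ, 0 < τ θ) :
    StrictConvexOn ℝ Set.univ (Wexp lam φ ε c τ ρ) := by
  have hlog := (convexOn_sum convex_univ univ fun γ _ =>
    (convexOn_log_add_sum_mul_exp (hε γ) (hc γ)).smul (hφ γ)).smul hlam
  have hexp := strictConvexOn_univ_sum_apply fun θ => strictConvexOn_mul_exp_sub_mul (hτ θ) (ρ θ)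
  simp only [smul_eq_mul] at hlog
  exact (hexp.add_convexOn hlog).congr fun y _ => by simp only [Wexp, Pi.add_apply]; ring

theorem tendsto_Wexp_cocompact (hlam : 0 ≤ lam) (hφ : ∀ γ, 0 ≤ φ γ) (hε : ∀ γ, 0 < ε γ)
    (hc : ∀ γ θ, 0 ≤ c γ θ) (hτ : ∀ θ, 0 < τ θ) (hρ : ∀ θ, 0 < ρ θ) :
    Tendsto (Wexp lam φ ε c τ ρ) (cocompact _) atTop := by
  have hlower : ∀ y, lam * ∑ γ, φ γ * log (ε γ) + ∑ θ, τ θ * (exp (y θ) - ρ θ * y θ) ≤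
      Wexp lam φ ε c τ ρ y := fun y =>
    add_le_add_left (mul_le_mul_of_nonneg_left (sum_le_sum fun γ _ =>
      mul_le_mul_of_nonneg_left (log_le_log (hε γ) (le_add_of_nonneg_right (sum_nonneg
        fun θ _ => mul_nonneg (hc γ θ) (exp_pos _).le))) (hφ γ)) hlam) _
  have hbdd : ∀ θ, BddBelow (Set.range fun u => τ θ * (exp u - ρ θ * u)) := fun θ =>
    ⟨τ θ * (ρ θ * (1 - log (ρ θ))), Set.forall_mem_range.2 fun u =>
      mul_le_mul_of_nonneg_left (by linarith [mul_sub_log_add_one_le_exp (hρ θ) u]) (hτ θ).le⟩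
  exact tendsto_atTop_mono hlower <| tendsto_atTop_add_const_left _ _ <|
    tendsto_sum_apply_cocompact_atTop hbdd fun θ =>
      (tendsto_exp_sub_mul_cocompact (hρ θ)).const_mul_atTop (hτ θ)

theorem hasDerivAt_Wexp_update [DecidableEq Θ] (hε : ∀ γ, 0 < ε γ) (hc : ∀ γ θ, 0 ≤ c γ θ)
    (y : Θ → ℝ) (θ : Θ) :
    HasDerivAt (fun t => Wexp lam φ ε c τ ρ (Function.update y θ t))
      (lam * ∑ γ, φ γ * (c γ θ * exp (y θ) / (ε γ + ∑ θ', c γ θ' * exp (y θ'))) +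
        τ θ * (exp (y θ) - ρ θ)) (y θ) := by
  have hu : ∀ θ', HasDerivAt (fun t => Function.update y θ t θ') ((Pi.single θ 1 : Θ → ℝ) θ')
      (y θ) :=
    hasDerivAt_pi.1 (hasDerivAt_update y θ (y θ))
  refine HasDerivAt.congr_deriv (((HasDerivAt.fun_sum (u := univ) fun γ _ =>
    (((HasDerivAt.fun_sum (u := univ) fun θ' _ => (hu θ').exp.const_mul (c γ θ')).const_add
      (ε γ)).log (add_sum_mul_exp_pos (hε γ) (hc γ) _).ne').const_mul (φ γ)).const_mul lam).fun_add
    (HasDerivAt.fun_sum (u := univ) fun θ' _ =>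
      ((hu θ').exp.fun_sub ((hu θ').const_mul (ρ θ'))).const_mul (τ θ'))) ?_
  simp only [Function.update_eq_self, ← sub_mul]
  simp only [Pi.single_apply, mul_ite, mul_one, mul_zero, sum_ite_eq', mem_univ, if_true]

theorem exp_lt_of_forall_Wexp_le [Nonempty Γ] (hlam : 0 < lam) (hφ : ∀ γ, 0 < φ γ)
    (hε : ∀ γ, 0 < ε γ) (hc : ∀ γ θ, 0 < c γ θ) (hτ : ∀ θ, 0 < τ θ) {y : Θ → ℝ}
    (hy : ∀ z, Wexp lam φ ε c τ ρ y ≤ Wexp lam φ ε c τ ρ z) (θ : Θ) : exp (y θ) < ρ θ := by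
  classical
  have hloc : IsLocalMin (fun t => Wexp lam φ ε c τ ρ (Function.update y θ t)) (y θ) :=
    Eventually.of_forall fun t => by simpa only [Function.update_eq_self] using hy _
  have hcrit := hloc.hasDerivAt_eq_zero (hasDerivAt_Wexp_update hε (fun γ θ => (hc γ θ).le) y θ)
  have hpos : 0 < lam * ∑ γ, φ γ * (c γ θ * exp (y θ) / (ε γ + ∑ θ', c γ θ' * exp (y θ'))) :=
    mul_pos hlam <| sum_pos (fun γ _ => mul_pos (hφ γ) <| div_pos (mul_pos (hc γ θ) (exp_pos _))
      (add_sum_mul_exp_pos (hε γ) (fun θ' => (hc γ θ').le) y)) univ_nonempty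
  have : τ θ * (exp (y θ) - ρ θ) < 0 := by linarith
  exact sub_neg.1 (neg_of_mul_neg_right this (hτ θ).le)

end Wexp

theorem mem_pi_Ioc_and_isMinOn_W_iff {lam : ℝ} {φ ε : Γ → ℝ} {α v : Γ → Θ → ℝ} {τ ρ : Θ → ℝ}
    (hconv : StrictConvexOn ℝ Set.univ (Wexp lam φ ε (fun γ θ => α γ θ * v γ θ) τ ρ))
    {y : Θ → ℝ} (hy : ∀ z, Wexp lam φ ε (fun γ θ => α γ θ * v γ θ) τ ρ y ≤
      Wexp lam φ ε (fun γ θ => α γ θ * v γ θ) τ ρ z)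
    (hyρ : ∀ θ, exp (y θ) ≤ ρ θ) (s : Θ → ℝ) :
    (s ∈ Set.univ.pi (fun θ => Set.Ioc 0 (ρ θ)) ∧
      IsMinOn (W lam φ ε α v τ ρ) (Set.univ.pi fun θ => Set.Ioc 0 (ρ θ)) s) ↔
      s = fun θ => exp (y θ) := by
  have hW_log : ∀ z ∈ Set.univ.pi (fun θ => Set.Ioc 0 (ρ θ)),
      W lam φ ε α v τ ρ z = Wexp lam φ ε (fun γ θ => α γ θ * v γ θ) τ ρ fun θ => log (z θ) :=
    fun z hz => by
      rw [← W_exp_eq_Wexp]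
      exact congrArg _ (funext fun θ => (exp_log (hz θ trivial).1).symm)
  constructor
  · rintro ⟨hs, hmin⟩
    have hlog : (fun θ => log (s θ)) = y := by
      refine hconv.eq_of_isMinOn (isMinOn_univ_iff.2 fun z => ?_) (isMinOn_univ_iff.2 hy)
        trivial trivial
      calc _ = W lam φ ε α v τ ρ s := (hW_log s hs).symm
        _ ≤ W lam φ ε α v τ ρ fun θ => exp (y θ) :=
          hmin fun θ _ => ⟨exp_pos _, hyρ θ⟩
        _ ≤ _ := (W_exp_eq_Wexp α v y).trans_le (hy z)
    funext θ
    rw [← hlog, exp_log (hs θ trivial).1]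
  · rintro rfl
    refine ⟨fun θ _ => ⟨exp_pos _, hyρ θ⟩, fun z hz => ?_⟩
    rw [Set.mem_ofPred_eq, W_exp_eq_Wexp, hW_log z hz]
    exact hy _

theorem W_unique_interior_minimizer_general (lam : ℝ) (φ ε : Γ → ℝ) (α v : Γ → Θ → ℝ)
    (τ ρ : Θ → ℝ) [Nonempty Γ]
    (hlam : 0 < lam) (hφ : ∀ γ, 0 < φ γ) (hε : ∀ γ, 0 < ε γ)
    (hα : ∀ γ θ, 0 < α γ θ) (hv : ∀ γ θ, 0 < v γ θ)
    (hτ : ∀ θ, 0 < τ θ) (hρ : ∀ θ, 0 < ρ θ) :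
    (∃! s : Θ → ℝ, (∀ θ, 0 < s θ ∧ s θ ≤ ρ θ) ∧
      ∀ z : Θ → ℝ, (∀ θ, 0 < z θ ∧ z θ ≤ ρ θ) →
        W lam φ ε α v τ ρ s ≤ W lam φ ε α v τ ρ z) ∧
    (∀ s : Θ → ℝ, ((∀ θ, 0 < s θ ∧ s θ ≤ ρ θ) ∧
      ∀ z : Θ → ℝ, (∀ θ, 0 < z θ ∧ z θ ≤ ρ θ) →
        W lam φ ε α v τ ρ s ≤ W lam φ ε α v τ ρ z) →
      ∀ θ, 0 < s θ ∧ s θ < ρ θ) := by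
  have hc : ∀ γ θ, 0 < α γ θ * v γ θ := fun γ θ => mul_pos (hα γ θ) (hv γ θ)
  obtain ⟨y, hy⟩ := (continuous_Wexp hε fun γ θ => (hc γ θ).le).exists_forall_le
    (tendsto_Wexp_cocompact hlam.le (fun γ => (hφ γ).le) hε (fun γ θ => (hc γ θ).le) hτ hρ)
  have hyρ := exp_lt_of_forall_Wexp_le hlam hφ hε hc hτ hy
  have key := mem_pi_Ioc_and_isMinOn_W_iff
    (strictConvexOn_Wexp hlam.le (fun γ => (hφ γ).le) hε (fun γ θ => (hc γ θ).le) hτ) hy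
    fun θ => (hyρ θ).le
  simp only [Set.mem_univ_pi, Set.mem_Ioc, isMinOn_iff] at key
  refine ⟨⟨_, (key _).2 rfl, fun s hs => (key s).1 hs⟩, fun s hs θ => ?_⟩
  obtain rfl := (key s).1 hs
  exact ⟨exp_pos _, hyρ θ⟩

theorem W_unique_interior_minimizer (lam : ℝ) (φ ε : Γ → ℝ) (α v : Γ → Θ → ℝ)
    (τ ρ : Θ → ℝ) [Nonempty Θ] [Nonempty Γ]
    (hlam : 0 < lam) (hφ : ∀ γ, 0 < φ γ) (hε : ∀ γ, 0 < ε γ)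
    (hα : ∀ γ θ, 0 < α γ θ) (hv : ∀ γ θ, 0 < v γ θ)
    (hτ : ∀ θ, 0 < τ θ) (hρ : ∀ θ, 0 < ρ θ) :
    (∃! s : Θ → ℝ, (∀ θ, 0 < s θ ∧ s θ ≤ ρ θ) ∧
      ∀ z : Θ → ℝ, (∀ θ, 0 < z θ ∧ z θ ≤ ρ θ) →
        W lam φ ε α v τ ρ s ≤ W lam φ ε α v τ ρ z) ∧
    (∀ s : Θ → ℝ, ((∀ θ, 0 < s θ ∧ s θ ≤ ρ θ) ∧
      ∀ z : Θ → ℝ, (∀ θ, 0 < z θ ∧ z θ ≤ ρ θ) →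
        W lam φ ε α v τ ρ s ≤ W lam φ ε α v τ ρ z) →
      ∀ θ, 0 < s θ ∧ s θ < ρ θ) :=
  W_unique_interior_minimizer_general lam φ ε α v τ ρ hlam hφ hε hα hv hτ hρ
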